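/- Let a : ℕ → ℝ be the (unbounded) sequence defined in consecutive blocks, where the n-th block (n ≥ 1) occupies positions n(n−1)/2, …, n(n+1)/2 − 1 and the entry at offset r (0 ≤ r < n) within that block equals (−1)^{n+1} (n − r). Then the Birkhoff averages B_m = (1/m) ∑_{i=0}^{m-1} a_i do not converge — in fact at m = n(n+1)/2 one has B_m = (n+1)/(2n) for n odd and B_m = −(n+2)/(2(n+1)) for n even, so limsup B_m = 1/2 and liminf B_m = −1/2 — while the first-order Hölder means H^{(1)}_m = (1/m) ∑_{i=1}^{m} B_i do converge. -/

import Mathlib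

open Filter Topology

/-- Birkhoff averages: `birk a n = (1/n) * ∑_{i=0}^{n-1} a i` (junk value `0` at `n = 0`). -/
noncomputable def birk (a : ℕ → ℝ) (n : ℕ) : ℝ := (∑ i ∈ Finset.range n, a i) / n

/-- Iterated Hölder means of a sequence `b` (indexed from 1):
`holderMeans b 0 n = b n` and `holderMeans b (k+1) n = (1/n) * ∑_{i=1}^n holderMeans b k i`. -/
noncomputable def holderMeans (b : ℕ → ℝ) : ℕ → ℕ → ℝ
  | 0, n => b n
  | k+1, n => (∑ i ∈ Finset.Icc 1 n, holderMeans b k i) / n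

/-!
Write `T n = n (n + 1) / 2` and `S m = ∑_{i < m} a i`. Inside block `n + 1` the partial sums
follow an explicit parabola, `S (T n + r) = s n + (-1)^n r (2n + 3 - r) / 2` with `s n ≈ ∓ n² / 4`,
so `|B m| ≤ 1/2 + O(1/n)` for `m` in that block, with the extremes `±1/2` approached at the block
ends; this gives the `limsup`, the `liminf` and the divergence.

For the Hölder means, replacing `1 / i` by `1 / T (n + 1)` changes the sum of `B i` over block
`n + 1` by `O(1)`, and the resulting average of the parabola is `(-1)^n (n + 6) / 6 + O(1/n)`.
Consecutive blocks therefore cancel up to `O(1)`, so `∑_{i ≤ m} B i = O(n) = o(m)`.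
-/

open Finset

def IsSignedSawtooth (a : ℕ → ℝ) : Prop :=
  ∀ n : ℕ, 1 ≤ n → ∀ r : ℕ, r < n →
    a (n * (n - 1) / 2 + r) = (-1 : ℝ) ^ (n + 1) * ((n : ℝ) - (r : ℝ))

def tri (n : ℕ) : ℕ := n * (n + 1) / 2

lemma two_mul_tri (n : ℕ) : 2 * tri n = n * (n + 1) :=
  Nat.mul_div_cancel' (Nat.even_mul_succ_self n).two_dvd

lemma tri_succ (n : ℕ) : tri (n + 1) = tri n + (n + 1) := by
  have := two_mul_tri n
  have := two_mul_tri (n + 1)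
  nlinarith

lemma cast_tri (n : ℕ) : (tri n : ℝ) = n * (n + 1) / 2 := by
  have := congrArg (Nat.cast (R := ℝ)) (two_mul_tri n)
  push_cast at this
  linarith

lemma le_tri (n : ℕ) : n ≤ tri n := by
  have := two_mul_tri n
  nlinarith

lemma sum_range_tri_succ {M : Type*} [AddCommMonoid M] (f : ℕ → M) (n : ℕ) :
    ∑ i ∈ range (tri (n + 1)), f i =
      ∑ i ∈ range (tri n), f i + ∑ j ∈ range (n + 1), f (tri n + j) := by
  rw [tri_succ, sum_range_add]

noncomputable def triPartialSum (n : ℕ) : ℝ :=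
  if Even n then -((n : ℝ) * (n + 2)) / 4 else ((n : ℝ) + 1) ^ 2 / 4

lemma triPartialSum_succ (n : ℕ) :
    triPartialSum (n + 1) = triPartialSum n + (-1) ^ n * (((n : ℝ) + 1) * (n + 2)) / 2 := by
  rcases Nat.even_or_odd n with h | h
  · rw [triPartialSum, triPartialSum, if_pos h, if_neg (Nat.not_even_iff_odd.2 h.add_one),
      h.neg_one_pow]
    push_cast; ring
  · rw [triPartialSum, triPartialSum, if_neg (Nat.not_even_iff_odd.2 h), if_pos h.add_one,
      h.neg_one_pow]
    push_cast; ring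

lemma tendsto_tri_comp_of_le {f : ℕ → ℕ} (hf : ∀ k, k ≤ f k) :
    Tendsto (fun k => tri (f k)) atTop atTop :=
  tendsto_atTop_mono (fun k => (hf k).trans (le_tri _)) tendsto_id

def blockIndex (m : ℕ) : ℕ := Nat.findGreatest (fun n => tri n ≤ m) m

lemma tri_blockIndex_le (m : ℕ) : tri (blockIndex m) ≤ m :=
  Nat.findGreatest_spec (P := fun n => tri n ≤ m) (m := 0) m.zero_le m.zero_le

lemma lt_tri_blockIndex_succ (m : ℕ) : m < tri (blockIndex m + 1) := by
  by_cases h : blockIndex m + 1 ≤ m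
  · exact not_le.1
      (Nat.findGreatest_is_greatest (P := fun n => tri n ≤ m) (Nat.lt_succ_self _) h)
  · exact (not_le.1 h).trans_le (le_tri _)

lemma exists_eq_tri_blockIndex_add (m : ℕ) :
    ∃ r ≤ blockIndex m, m = tri (blockIndex m) + r := by
  have h₁ := tri_blockIndex_le m
  have h₂ := lt_tri_blockIndex_succ m
  rw [tri_succ] at h₂
  exact ⟨m - tri (blockIndex m), by omega, by omega⟩

lemma tendsto_blockIndex : Tendsto blockIndex atTop atTop :=
  tendsto_atTop_atTop.2 fun N =>
    ⟨tri N, fun _ hm => Nat.le_findGreatest ((le_tri N).trans hm) hm⟩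

lemma limsup_eq_and_liminf_eq_of_abs_le {u ε : ℕ → ℝ} {c : ℝ} (hε : Tendsto ε atTop (𝓝 0))
    (hu : ∀ m, |u m| ≤ c + ε m) (hup : ∃ᶠ m in atTop, c ≤ u m)
    (hlow : ∃ᶠ m in atTop, u m ≤ -c) :
    limsup u atTop = c ∧ liminf u atTop = -c := by
  have hv : Tendsto (fun m => c + ε m) atTop (𝓝 c) := by simpa using hε.const_add c
  have hle : ∀ m, u m ≤ c + ε m := fun m => (le_abs_self _).trans (hu m)
  have hge : ∀ m, -(c + ε m) ≤ u m := fun m => neg_le_of_abs_le (hu m)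
  have hbdd : IsBoundedUnder (· ≤ ·) atTop u :=
    hv.isBoundedUnder_le.mono_le (Eventually.of_forall hle)
  have hbdd' : IsBoundedUnder (· ≥ ·) atTop u :=
    hv.neg.isBoundedUnder_ge.mono_ge (Eventually.of_forall hge)
  constructor
  · refine le_antisymm ?_ (le_limsup_of_frequently_le hup hbdd)
    calc limsup u atTop ≤ limsup (fun m => c + ε m) atTop :=
          limsup_le_limsup (Eventually.of_forall hle) hbdd'.isCoboundedUnder_le
            hv.isBoundedUnder_le
      _ = c := hv.limsup_eq
  · refine le_antisymm (liminf_le_of_frequently_le hlow hbdd') ?_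
    calc -c = liminf (fun m => -(c + ε m)) atTop := hv.neg.liminf_eq.symm
      _ ≤ liminf u atTop :=
          liminf_le_liminf (Eventually.of_forall hge) hv.neg.isBoundedUnder_ge
            hbdd.isCoboundedUnder_ge

lemma sum_range_succ_mul_sub (c : ℝ) (N : ℕ) :
    ∑ j ∈ range N, ((j : ℝ) + 1) * (c - (j + 1)) =
      c * N * (N + 1) / 2 - N * (N + 1) * (2 * N + 1) / 6 := by
  induction N with
  | zero => simp
  | succ N ih => rw [sum_range_succ, ih]; push_cast; ring

namespace IsSignedSawtooth

variable {a : ℕ → ℝ}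

lemma apply_tri_add (ha : IsSignedSawtooth a) {n r : ℕ} (hr : r ≤ n) :
    a (tri n + r) = (-1) ^ n * ((n : ℝ) + 1 - r) := by
  have h := ha (n + 1) (by omega) r (by omega)
  rw [Nat.add_sub_cancel, mul_comm] at h
  rw [tri, h]
  push_cast; ring

lemma sum_block (ha : IsSignedSawtooth a) {n r : ℕ} (hr : r ≤ n + 1) :
    ∑ j ∈ range r, a (tri n + j) = (-1) ^ n * (r * (2 * n + 3 - r)) / 2 := by
  induction r with
  | zero => simp
  | succ r ih =>
    rw [sum_range_succ, ih (by omega), ha.apply_tri_add (by omega)]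
    push_cast; ring

lemma sum_range_tri (ha : IsSignedSawtooth a) (n : ℕ) :
    ∑ i ∈ range (tri n), a i = triPartialSum n := by
  induction n with
  | zero => simp [tri, triPartialSum]
  | succ n ih =>
    rw [sum_range_tri_succ, ih, ha.sum_block le_rfl, triPartialSum_succ]
    push_cast; ring

lemma sum_range_tri_add (ha : IsSignedSawtooth a) {n r : ℕ} (hr : r ≤ n + 1) :
    ∑ i ∈ range (tri n + r), a i = triPartialSum n + (-1) ^ n * (r * (2 * n + 3 - r)) / 2 := by
  rw [sum_range_add, ha.sum_range_tri, ha.sum_block hr]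

lemma abs_sum_range_tri_add_le (ha : IsSignedSawtooth a) {n r : ℕ} (hr : r ≤ n + 1) :
    |∑ i ∈ range (tri n + r), a i| ≤ ((n : ℝ) + 2) ^ 2 / 4 := by
  have hr' : (r : ℝ) ≤ n + 1 := by exact_mod_cast hr
  have h₀ : 0 ≤ (r : ℝ) * (2 * n + 3 - r) := mul_nonneg r.cast_nonneg (by linarith)
  have h₁ : (r : ℝ) * (2 * n + 3 - r) ≤ (n + 1) * (n + 2) := by nlinarith
  rw [ha.sum_range_tri_add hr, triPartialSum, abs_le]
  rcases Nat.even_or_odd n with h | h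
  · rw [if_pos h, h.neg_one_pow]
    constructor <;> nlinarith
  · rw [if_neg (Nat.not_even_iff_odd.2 h), h.neg_one_pow]
    constructor <;> nlinarith

lemma birk_tri (ha : IsSignedSawtooth a) (n : ℕ) :
    birk a (tri n) = triPartialSum n / tri n := by
  rw [birk, ha.sum_range_tri]

lemma birk_tri_of_odd (ha : IsSignedSawtooth a) {n : ℕ} (hn : Odd n) :
    birk a (tri n) = ((n : ℝ) + 1) / (2 * n) := by
  have hn₀ : (n : ℝ) ≠ 0 := by exact_mod_cast hn.pos.ne'
  rw [ha.birk_tri, triPartialSum, if_neg (Nat.not_even_iff_odd.2 hn), cast_tri]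
  field_simp
  ring

lemma birk_tri_of_even (ha : IsSignedSawtooth a) {n : ℕ} (hn : 1 ≤ n) (he : Even n) :
    birk a (tri n) = -(((n : ℝ) + 2) / (2 * ((n : ℝ) + 1))) := by
  have hn₀ : (n : ℝ) ≠ 0 := by positivity
  rw [ha.birk_tri, triPartialSum, if_pos he, cast_tri]
  field_simp
  ring

lemma abs_birk_tri_add_le (ha : IsSignedSawtooth a) {n r : ℕ} (hn : 1 ≤ n) (hr : r ≤ n + 1) :
    |birk a (tri n + r)| ≤ 1 / 2 + 2 / n := by
  have hn' : (1 : ℝ) ≤ n := by exact_mod_cast hn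
  have htri : (n : ℝ) * (n + 1) / 2 ≤ ((tri n + r : ℕ) : ℝ) := by
    push_cast [cast_tri]
    linarith [r.cast_nonneg (α := ℝ)]
  rw [birk, abs_div, Nat.abs_cast]
  calc |∑ i ∈ range (tri n + r), a i| / ((tri n + r : ℕ) : ℝ)
      ≤ ((n + 2) ^ 2 / 4) / (n * (n + 1) / 2) :=
        div_le_div₀ (by positivity) (ha.abs_sum_range_tri_add_le hr) (by positivity) htri
    _ ≤ 1 / 2 + 2 / n := by
        rw [div_add_div _ _ two_ne_zero (by positivity), div_le_div_iff₀ (by positivity)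
          (by positivity)]
        nlinarith

lemma abs_birk_le (ha : IsSignedSawtooth a) (m : ℕ) :
    |birk a m| ≤ 1 / 2 + 2 / blockIndex m := by
  obtain ⟨r, hr, hm⟩ := exists_eq_tri_blockIndex_add m
  generalize blockIndex m = n at hr hm ⊢
  subst hm
  rcases n.eq_zero_or_pos with rfl | hn
  · obtain rfl : r = 0 := by omega
    simp [tri, birk]
  · exact ha.abs_birk_tri_add_le hn (by omega)

lemma frequently_half_le_birk (ha : IsSignedSawtooth a) :
    ∃ᶠ m in atTop, 1 / 2 ≤ birk a m := by
  refine (tendsto_tri_comp_of_le (f := fun k => 2 * k + 1) (by omega)).frequently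
    (Frequently.of_forall fun k => ?_)
  rw [ha.birk_tri_of_odd (odd_two_mul_add_one k), le_div_iff₀ (by positivity)]
  linarith

lemma frequently_birk_le_neg_half (ha : IsSignedSawtooth a) :
    ∃ᶠ m in atTop, birk a m ≤ -(1 / 2) := by
  refine (tendsto_tri_comp_of_le (f := fun k => 2 * k + 2) (by omega)).frequently
    (Frequently.of_forall fun k => ?_)
  rw [ha.birk_tri_of_even (by omega) ⟨k + 1, by ring⟩, neg_le_neg_iff,
    le_div_iff₀ (by positivity)]
  push_cast
  linarith

lemma sum_block_partialSums (ha : IsSignedSawtooth a) (k : ℕ) :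
    ∑ j ∈ range (k + 1), ∑ i ∈ range (tri k + (j + 1)), a i =
      (k + 1) * triPartialSum k + (-1) ^ k * ((k + 1) * (k + 2) * (2 * k + 3)) / 6 := by
  have hterm : ∀ j ∈ range (k + 1), ∑ i ∈ range (tri k + (j + 1)), a i =
      triPartialSum k + (-1) ^ k / 2 * (((j : ℝ) + 1) * ((2 * k + 3) - ((j : ℝ) + 1))) := by
    intro j hj
    rw [ha.sum_range_tri_add (by simpa using hj)]
    push_cast; ring
  rw [sum_congr rfl hterm, sum_add_distrib, sum_const, card_range, nsmul_eq_mul, ← mul_sum,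
    sum_range_succ_mul_sub]
  push_cast; ring

lemma abs_sum_block_partialSums_div_sub_le (ha : IsSignedSawtooth a) (k : ℕ) :
    |(∑ j ∈ range (k + 1), ∑ i ∈ range (tri k + (j + 1)), a i) / tri (k + 1) -
      (-1) ^ k * ((k : ℝ) + 6) / 6| ≤ 1 / 4 := by
  rw [ha.sum_block_partialSums, cast_tri, triPartialSum]
  push_cast
  rcases Nat.even_or_odd k with h | h
  · rw [if_pos h, h.neg_one_pow]
    have : ((k : ℝ) + 1) * (-(k * (k + 2)) / 4) + 1 * ((k + 1) * (k + 2) * (2 * k + 3)) / 6 =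
        (k + 6) / 6 * ((k + 1) * (k + 1 + 1) / 2) := by ring
    rw [this, mul_div_cancel_right₀ _ (by positivity)]
    norm_num
  · rw [if_neg (Nat.not_even_iff_odd.2 h), h.neg_one_pow]
    have : ((k : ℝ) + 1) * ((k + 1) ^ 2 / 4) + -1 * ((k + 1) * (k + 2) * (2 * k + 3)) / 6 =
        (-1 * (k + 6) / 6 + 1 / (2 * (k + 2))) * ((k + 1) * (k + 1 + 1) / 2) := by
      field_simp; ring
    rw [this, mul_div_cancel_right₀ _ (by positivity), add_sub_cancel_left,
      abs_of_pos (by positivity), div_le_div_iff₀ (by positivity) (by norm_num)]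
    linarith [k.cast_nonneg (α := ℝ)]

lemma abs_birk_sub_partialSum_div_le (ha : IsSignedSawtooth a) {k r : ℕ} (hr₁ : 1 ≤ r)
    (hr : r ≤ k + 1) :
    |birk a (tri k + r) - (∑ i ∈ range (tri k + r), a i) / tri (k + 1)| ≤ 2 / (k + 1) := by
  set x := ∑ i ∈ range (tri k + r), a i
  have hx : |x| ≤ ((k : ℝ) + 2) ^ 2 / 4 := ha.abs_sum_range_tri_add_le hr
  have hr₁' : (1 : ℝ) ≤ r := by exact_mod_cast hr₁
  have hr' : (r : ℝ) ≤ k + 1 := by exact_mod_cast hr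
  set i : ℝ := ((tri k + r : ℕ) : ℝ) with hi
  set t : ℝ := (tri (k + 1) : ℝ) with ht
  have hi' : i = k * (k + 1) / 2 + r := by rw [hi]; push_cast [cast_tri]; ring
  have ht' : t = (k + 1) * (k + 2) / 2 := by rw [ht, cast_tri]; push_cast; ring
  have hi₀ : 0 < i := by rw [hi']; positivity
  have ht₀ : 0 < t := by rw [ht']; positivity
  rw [birk, div_sub_div _ _ hi₀.ne' ht₀.ne', abs_div, abs_of_pos (mul_pos hi₀ ht₀),
    show x * t - i * x = x * (t - i) by ring, abs_mul,
    abs_of_nonneg (a := t - i) (by rw [hi', ht']; nlinarith),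
    div_le_div_iff₀ (mul_pos hi₀ ht₀) (by positivity)]
  calc |x| * (t - i) * (k + 1) ≤ ((k + 2) ^ 2 / 4) * k * (k + 1) := by
        gcongr
        · rw [hi', ht']; nlinarith
        · rw [hi', ht']; nlinarith
    _ ≤ 2 * (i * t) := by rw [hi', ht']; nlinarith

lemma abs_sum_block_birk_sub_div_le (ha : IsSignedSawtooth a) (k : ℕ) :
    |∑ j ∈ range (k + 1), birk a (tri k + j + 1) -
      (∑ j ∈ range (k + 1), ∑ i ∈ range (tri k + (j + 1)), a i) / tri (k + 1)| ≤ 2 := by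
  rw [sum_div, ← sum_sub_distrib]
  calc _ ≤ ∑ j ∈ range (k + 1), |birk a (tri k + j + 1) -
          (∑ i ∈ range (tri k + (j + 1)), a i) / tri (k + 1)| := abs_sum_le_sum_abs _ _
    _ ≤ ∑ _j ∈ range (k + 1), 2 / ((k : ℝ) + 1) := sum_le_sum fun j hj =>
        ha.abs_birk_sub_partialSum_div_le (r := j + 1) (by omega) (by simpa using hj)
    _ = 2 := by
        rw [sum_const, card_range, nsmul_eq_mul]
        push_cast
        field_simp

lemma abs_sum_block_birk_sub_alternating_le (ha : IsSignedSawtooth a) (k : ℕ) :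
    |∑ j ∈ range (k + 1), birk a (tri k + j + 1) - (-1) ^ k * ((k : ℝ) + 6) / 6| ≤ 9 / 4 := by
  have h₁ := ha.abs_sum_block_birk_sub_div_le k
  have h₂ := ha.abs_sum_block_partialSums_div_sub_le k
  calc _ ≤ _ + _ :=
        abs_sub_le _ ((∑ j ∈ range (k + 1), ∑ i ∈ range (tri k + (j + 1)), a i) / tri (k + 1)) _
    _ ≤ 9 / 4 := by linarith

lemma abs_sum_range_tri_birk_le (ha : IsSignedSawtooth a) (n : ℕ) :
    |∑ i ∈ range (tri n), birk a (i + 1)| ≤ 5 * ((n : ℝ) + 1) := by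
  induction n using Nat.twoStepInduction with
  | zero => simp [tri]
  | one =>
    have h := ha.abs_sum_block_birk_sub_alternating_le 0
    rw [sum_range_tri_succ, show tri 0 = 0 from rfl, range_zero, sum_empty, zero_add]
    norm_num [tri] at h ⊢
    linarith [abs_sub_abs_le_abs_sub (birk a 1) 1, abs_one (α := ℝ)]
  | more n ih _ =>
    have h₁ := ha.abs_sum_block_birk_sub_alternating_le n
    have h₂ := ha.abs_sum_block_birk_sub_alternating_le (n + 1)
    rw [sum_range_tri_succ, sum_range_tri_succ]
    rw [pow_succ] at h₂
    push_cast at ih h₂ ⊢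
    rcases neg_one_pow_eq_or ℝ n with h | h <;>
    · rw [h] at h₁ h₂
      rw [abs_le] at *
      constructor <;> linarith

lemma abs_sum_range_tri_add_birk_le (ha : IsSignedSawtooth a) {n r : ℕ} (hn : 1 ≤ n)
    (hr : r ≤ n) : |∑ i ∈ range (tri n + r), birk a (i + 1)| ≤ 8 * ((n : ℝ) + 1) := by
  have hn' : (1 : ℝ) ≤ n := by exact_mod_cast hn
  have hr' : (r : ℝ) ≤ n := by exact_mod_cast hr
  have hblock : |∑ j ∈ range r, birk a (tri n + j + 1)| ≤ r * (1 / 2 + 2 / n) :=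
    calc _ ≤ ∑ j ∈ range r, |birk a (tri n + j + 1)| := abs_sum_le_sum_abs _ _
      _ ≤ ∑ _j ∈ range r, (1 / 2 + 2 / (n : ℝ)) := sum_le_sum fun j hj =>
          ha.abs_birk_tri_add_le (r := j + 1) hn (by simp at hj; omega)
      _ = r * (1 / 2 + 2 / n) := by rw [sum_const, card_range, nsmul_eq_mul]
  have hr₂ : (r : ℝ) * (2 / n) ≤ 2 := by
    rw [mul_div_assoc', div_le_iff₀ (by positivity)]
    linarith
  rw [sum_range_add]
  calc _ ≤ _ + _ := abs_add_le _ _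
    _ ≤ 5 * ((n : ℝ) + 1) + r * (1 / 2 + 2 / n) :=
        add_le_add (ha.abs_sum_range_tri_birk_le n) hblock
    _ ≤ 8 * ((n : ℝ) + 1) := by linarith

lemma abs_holderMeans_birk_le (ha : IsSignedSawtooth a) (m : ℕ) :
    |holderMeans (birk a) 1 m| ≤ 16 / blockIndex m := by
  have hH : holderMeans (birk a) 1 m = (∑ i ∈ range m, birk a (i + 1)) / m := by
    rw [holderMeans, range_eq_Ico, sum_Ico_add' _ 0 m 1]
    rfl
  obtain ⟨r, hr, hm⟩ := exists_eq_tri_blockIndex_add m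
  rw [hH]
  generalize blockIndex m = n at hr hm ⊢
  subst hm
  rcases n.eq_zero_or_pos with rfl | hn
  · obtain rfl : r = 0 := by omega
    simp [tri]
  · have hn' : (1 : ℝ) ≤ n := by exact_mod_cast hn
    have htri : (n : ℝ) * (n + 1) / 2 ≤ ((tri n + r : ℕ) : ℝ) := by
      push_cast [cast_tri]
      linarith [r.cast_nonneg (α := ℝ)]
    rw [abs_div, Nat.abs_cast]
    calc _ ≤ 8 * ((n : ℝ) + 1) / (n * (n + 1) / 2) :=
          div_le_div₀ (by positivity) (ha.abs_sum_range_tri_add_birk_le hn hr) (by positivity)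
            htri
      _ = 16 / n := by field_simp; ring

lemma tendsto_holderMeans_birk (ha : IsSignedSawtooth a) :
    Tendsto (fun m => holderMeans (birk a) 1 m) atTop (𝓝 0) :=
  squeeze_zero_norm ha.abs_holderMeans_birk_le
    ((tendsto_const_div_atTop_nhds_zero_nat 16).comp tendsto_blockIndex)

end IsSignedSawtooth

/-- **Example 3** (an `L¹` counterexample).  Let `a` be the unbounded sequence whose
`n`-th block (`n ≥ 1`) occupies positions `n(n-1)/2, …, n(n+1)/2 - 1`, with entry
`(-1)^{n+1} (n - r)` at offset `r` (`0 ≤ r < n`).  Then the Birkhoff averages do not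
converge — at `m = n(n+1)/2` one has `B_m = (n+1)/(2n)` for `n` odd and
`B_m = -(n+2)/(2(n+1))` for `n` even, so `limsup B = 1/2` and `liminf B = -1/2` —
while the first-order Hölder means `H^{(1)}_m = (1/m) ∑_{i=1}^m B_i` do converge. -/
theorem exampleThree_first_holder_converges (a : ℕ → ℝ)
    (ha : ∀ n : ℕ, 1 ≤ n → ∀ r : ℕ, r < n →
      a (n * (n - 1) / 2 + r) = (-1 : ℝ) ^ (n + 1) * ((n : ℝ) - (r : ℝ))) :
    (∀ n : ℕ, 1 ≤ n → Odd n →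
      birk a (n * (n + 1) / 2) = ((n : ℝ) + 1) / (2 * (n : ℝ))) ∧
    (∀ n : ℕ, 1 ≤ n → Even n →
      birk a (n * (n + 1) / 2) = -(((n : ℝ) + 2) / (2 * ((n : ℝ) + 1)))) ∧
    limsup (birk a) atTop = 1 / 2 ∧
    liminf (birk a) atTop = -(1 / 2) ∧
    (¬ ∃ L : ℝ, Tendsto (birk a) atTop (𝓝 L)) ∧
    (∃ L : ℝ, Tendsto (fun m : ℕ => holderMeans (birk a) 1 m) atTop (𝓝 L)) := by
  replace ha : IsSignedSawtooth a := ha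
  obtain ⟨hlimsup, hliminf⟩ := limsup_eq_and_liminf_eq_of_abs_le
    ((tendsto_const_div_atTop_nhds_zero_nat 2).comp tendsto_blockIndex) ha.abs_birk_le
    ha.frequently_half_le_birk ha.frequently_birk_le_neg_half
  refine ⟨fun n _ hn => ha.birk_tri_of_odd hn, fun n hn he => ha.birk_tri_of_even hn he,
    hlimsup, hliminf, ?_, ⟨0, ha.tendsto_holderMeans_birk⟩⟩
  rintro ⟨L, hL⟩
  have h₁ := hL.limsup_eq.symm.trans hlimsup
  have h₂ := hL.liminf_eq.symm.trans hliminf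
  linarith
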